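/- If nodes n and n' (in possibly different RBR graphs) satisfy Ψ_n^i = Ψ_{n'}^i, then the i-th rationalisation from the full strategy space agrees at these nodes in every game: ℝ_B^i(S^Δ)_n = ℝ_{B'}^i(S^Δ)_{n'}. -/
import Mathlib


/-- The strict part of a preference relation on outcomes. -/
def StrictPref {A : Type} {Δ : A → Type}
    (le : (∀ b, Δ b) → (∀ b, Δ b) → Prop) (s s' : ∀ b, Δ b) : Prop :=
  le s s' ∧ ¬ le s' s

/-- `s'` dominates `s` for agent `a` in reasoning scene `Θ`. -/
def Dominates {A : Type} [DecidableEq A] {Δ : A → Type}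
    (le : (∀ b, Δ b) → (∀ b, Δ b) → Prop) (a : A)
    (Θ : ∀ b, Set (Δ b)) (s s' : Δ a) : Prop :=
  ∀ t : ∀ b, Δ b, (∀ b, b ≠ a → t b ∈ Θ b) →
    StrictPref le (Function.update t a s) (Function.update t a s')

/-- The rational response of agent `a` in scene `Θ`. -/
def RationalResponse {A : Type} [DecidableEq A] {Δ : A → Type}
    (le : (∀ b, Δ b) → (∀ b, Δ b) → Prop) (a : A)
    (Θ : ∀ b, Set (Δ b)) : Set (Δ a) :=
  {s | ¬ ∃ s' : Δ a, Dominates le a Θ s s'}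

/-- The belief scene of node `n` under solution `S`: agent `b` is restricted
to `S n'` whenever `n'` is an out-neighbour of `n` labelled `b`, and is
unrestricted otherwise. -/
def BeliefScene {A : Type} {Δ : A → Type} {Node : Type}
    (E : Node → Node → Prop) (lab : Node → A)
    (S : ∀ n : Node, Set (Δ (lab n))) (n : Node) (b : A) : Set (Δ b) :=
  {x | ∀ n', E n n' → ∀ h : lab n' = b, x ∈ (h ▸ S n' : Set (Δ b))}

/-- Rationalisation of a solution on an RBR graph: each node's set is
replaced by the rational response of its label in its belief scene. -/
def Rationalise {A : Type} [DecidableEq A] {Δ : A → Type} {Node : Type}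
    (le : A → (∀ b, Δ b) → (∀ b, Δ b) → Prop)
    (E : Node → Node → Prop) (lab : Node → A)
    (S : ∀ n : Node, Set (Δ (lab n))) : ∀ n : Node, Set (Δ (lab n)) :=
  fun n => RationalResponse (le (lab n)) (lab n) (BeliefScene E lab S n)

/-- The solution assigning the full strategy space at every node. -/
def FullSolution {A : Type} {Δ : A → Type} {Node : Type} (lab : Node → A) :
    ∀ n : Node, Set (Δ (lab n)) := fun _ => Set.univ

/-- `PiSet E lab i n` is the set of belief sequences of paths of length `i`
starting at node `n` in the RBR graph `(E, lab)`. -/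
def PiSet {A : Type} {Node : Type} (E : Node → Node → Prop) (lab : Node → A) :
    ℕ → Node → Set (List A)
  | 0, _ => ∅
  | 1, n => {[lab n]}
  | i + 2, n => {l | ∃ m, E n m ∧ ∃ σ ∈ PiSet E lab (i + 1) m, l = lab n :: σ}

/-- `PsiSet E lab j n` is the set of belief sequences of paths of length at
most `j` starting at node `n`. -/
def PsiSet {A : Type} {Node : Type} (E : Node → Node → Prop) (lab : Node → A)
    (j : ℕ) (n : Node) : Set (List A) :=
  {l | ∃ i, 0 < i ∧ i ≤ j ∧ l ∈ PiSet E lab i n}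

/-- `PsiStar E lab n` is the set of belief sequences of all paths starting
at node `n` — the full belief hierarchy of node `n`. -/
def PsiStar {A : Type} {Node : Type} (E : Node → Node → Prop) (lab : Node → A)
    (n : Node) : Set (List A) :=
  {l | ∃ i, l ∈ PiSet E lab i n}

/- ------------------- auxiliary lemmas ------------------- -/

lemma piSet_head {A Node : Type} (E : Node → Node → Prop) (lab : Node → A) :
    ∀ (j : ℕ) (m : Node) (l : List A), l ∈ PiSet E lab j m → ∃ σ, l = lab m :: σ := by
  intro j
  match j with
  | 0 => intro m l h; simp [PiSet] at h
  | 1 =>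
    intro m l h
    have : l = [lab m] := h
    exact ⟨[], this⟩
  | j + 2 =>
    intro m l h
    obtain ⟨m', _, σ, _, rfl⟩ := h
    exact ⟨σ, rfl⟩

lemma singleton_mem_psiSet {A Node : Type} (E : Node → Node → Prop) (lab : Node → A)
    {i : ℕ} (hi : 1 ≤ i) (m : Node) : [lab m] ∈ PsiSet E lab i m :=
  ⟨1, one_pos, hi, rfl⟩

lemma cons_mem_psiSet {A Node : Type} {E : Node → Node → Prop} {lab : Node → A}
    {i : ℕ} {n m : Node} {σ : List A} (hE : E n m) (hσ : σ ∈ PsiSet E lab i m) :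
    lab n :: σ ∈ PsiSet E lab (i + 1) n := by
  obtain ⟨i', h0, hle, hmem⟩ := hσ
  obtain ⟨k, rfl⟩ := Nat.exists_eq_succ_of_ne_zero (by omega : i' ≠ 0)
  refine ⟨k + 2, by omega, by omega, ?_⟩
  exact ⟨m, hE, σ, hmem, rfl⟩

lemma of_cons_mem_psiSet {A Node : Type} {E : Node → Node → Prop} {lab : Node → A}
    {i : ℕ} {n : Node} {σ : List A} (h : lab n :: σ ∈ PsiSet E lab (i + 1) n)
    (hne : σ ≠ []) : ∃ m, E n m ∧ σ ∈ PsiSet E lab i m := by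
  obtain ⟨i', h0, hle, hmem⟩ := h
  match i', h0, hle, hmem with
  | 1, _, _, hmem =>
    have : lab n :: σ = [lab n] := hmem
    simp at this
    exact absurd this hne
  | k + 2, _, hle, hmem =>
    obtain ⟨m, hE, τ, hτ, heq⟩ := hmem
    have hστ : σ = τ := by injection heq
    subst hστ
    exact ⟨m, hE, k + 1, by omega, by omega, hτ⟩

lemma cast_univ_set {A : Type} {Δ : A → Type} {a b : A} (h : a = b) :
    (h ▸ (Set.univ : Set (Δ a)) : Set (Δ b)) = Set.univ := by subst h; rfl

lemma mem_cast_iff {A : Type} {Δ : A → Type} {a a' b : A} (h : a = b) (h' : a' = b)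
    {S : Set (Δ a)} {S' : Set (Δ a')} (hS : HEq S S') (x : Δ b) :
    x ∈ (h ▸ S : Set (Δ b)) ↔ x ∈ (h' ▸ S' : Set (Δ b)) := by
  subst h; subst h'
  rw [eq_of_heq hS]

lemma heq_rationalResponse {A : Type} [DecidableEq A] {Δ : A → Type}
    (le : A → (∀ b, Δ b) → (∀ b, Δ b) → Prop) {a a' : A} (h : a = a')
    {Θ Θ' : ∀ b, Set (Δ b)} (hΘ : Θ = Θ') :
    HEq (RationalResponse (le a) a Θ) (RationalResponse (le a') a' Θ') := by
  subst h; subst hΘ; rfl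

lemma beliefScene_full {A : Type} {Δ : A → Type} {Node : Type}
    (E : Node → Node → Prop) (lab : Node → A) (n : Node) :
    BeliefScene (Δ := Δ) E lab (FullSolution lab) n = fun _ => Set.univ := by
  funext b
  ext x
  simp only [BeliefScene, FullSolution, Set.mem_setOf_eq, Set.mem_univ, iff_true]
  intro n' _ h
  rw [cast_univ_set h]
  trivial

lemma label_eq_of_psiSet_eq {A Node Node' : Type}
    {E : Node → Node → Prop} {lab : Node → A}
    {E' : Node' → Node' → Prop} {lab' : Node' → A}
    {n : Node} {n' : Node'} {i : ℕ} (hi : 1 ≤ i)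
    (hpsi : PsiSet E lab i n = PsiSet E' lab' i n') : lab n = lab' n' := by
  have h1 : [lab n] ∈ PsiSet E' lab' i n' := hpsi ▸ singleton_mem_psiSet E lab hi n
  obtain ⟨i', _, _, hmem⟩ := h1
  obtain ⟨σ, hσ⟩ := piSet_head E' lab' i' n' _ hmem
  exact (List.cons.injEq _ _ _ _ ▸ hσ).1

/-- if nodes `n` and `n'` in (possibly different) RBR graphs
satisfy `Ψ_n^i = Ψ_{n'}^i` (with `i ≥ 1`), then in every game the `i`-th
rationalisation from the full strategy space agrees at these nodes (their
labels coincide, and the resulting strategy sets are (heterogeneously)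
equal). -/
theorem rationalise_iterate_eq_of_psiSet_eq {A : Type} [Fintype A] [DecidableEq A]
    {Δ : A → Type} [∀ b, Fintype (Δ b)] [∀ b, Nonempty (Δ b)]
    (le : A → (∀ b, Δ b) → (∀ b, Δ b) → Prop)
    {Node Node' : Type} [Fintype Node] [Fintype Node']
    (E : Node → Node → Prop) (lab : Node → A)
    (E' : Node' → Node' → Prop) (lab' : Node' → A)
    (lab_ne : ∀ n m, E n m → lab n ≠ lab m)
    (lab_ne' : ∀ n m, E' n m → lab' n ≠ lab' m)
    (out_inj : ∀ n m₁ m₂, E n m₁ → E n m₂ → lab m₁ = lab m₂ → m₁ = m₂)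
    (out_inj' : ∀ n m₁ m₂, E' n m₁ → E' n m₂ → lab' m₁ = lab' m₂ → m₁ = m₂)
    (n : Node) (n' : Node') (i : ℕ) (hi : 1 ≤ i)
    (hpsi : PsiSet E lab i n = PsiSet E' lab' i n') :
    lab n = lab' n' ∧
      HEq ((Rationalise le E lab)^[i] (FullSolution lab) n)
        ((Rationalise le E' lab')^[i] (FullSolution lab') n') := by
  induction i, hi using Nat.le_induction generalizing n n' with
  | base =>
    have h := label_eq_of_psiSet_eq le_rfl hpsi
    refine ⟨h, ?_⟩
    simp only [Function.iterate_one]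
    show HEq (RationalResponse (le (lab n)) (lab n)
        (BeliefScene E lab (FullSolution lab) n))
      (RationalResponse (le (lab' n')) (lab' n')
        (BeliefScene E' lab' (FullSolution lab') n'))
    rw [beliefScene_full, beliefScene_full]
    exact heq_rationalResponse le h rfl
  | succ i hi IH =>
    have h : lab n = lab' n' := label_eq_of_psiSet_eq (by omega) hpsi
    set S : ∀ m : Node, Set (Δ (lab m)) :=
      (Rationalise le E lab)^[i] (FullSolution lab) with hS
    set S' : ∀ m : Node', Set (Δ (lab' m)) :=
      (Rationalise le E' lab')^[i] (FullSolution lab') with hS'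
    -- key correspondence between neighbours
    have corr : ∀ m' : Node', E' n' m' → ∃ m, E n m ∧ lab m = lab' m' ∧
        PsiSet E lab i m = PsiSet E' lab' i m' := by
      intro m' hE'
      have h1 : lab' n' :: [lab' m'] ∈ PsiSet E' lab' (i + 1) n' :=
        cons_mem_psiSet hE' (singleton_mem_psiSet E' lab' hi m')
      have h2 : lab n :: [lab' m'] ∈ PsiSet E lab (i + 1) n := by
        rw [h, hpsi]; exact h1
      obtain ⟨m, hE, hmem⟩ := of_cons_mem_psiSet h2 (by simp)
      have hlabm : lab m = lab' m' := by
        obtain ⟨i', _, _, hm⟩ := hmem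
        obtain ⟨σ, hσ⟩ := piSet_head E lab i' m _ hm
        injection hσ with h _
        exact h.symm
      refine ⟨m, hE, hlabm, ?_⟩
      ext σ
      constructor
      · intro hσ
        obtain ⟨i', hi0, hile, hmem'⟩ := hσ
        obtain ⟨τ, rfl⟩ := piSet_head E lab i' m σ hmem'
        have h3 : lab n :: (lab m :: τ) ∈ PsiSet E lab (i + 1) n :=
          cons_mem_psiSet hE ⟨i', hi0, hile, hmem'⟩
        have h4 : lab' n' :: (lab m :: τ) ∈ PsiSet E' lab' (i + 1) n' := by
          rw [← h, ← hpsi]; exact h3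
        obtain ⟨m₂, hE₂, hmem₂⟩ := of_cons_mem_psiSet h4 (by simp)
        have : lab' m₂ = lab' m' := by
          obtain ⟨i'', _, _, hm₂⟩ := hmem₂
          obtain ⟨σ₂, hσ₂⟩ := piSet_head E' lab' i'' m₂ _ hm₂
          injection hσ₂ with hh _
          rw [← hh, hlabm]
        rw [out_inj' n' m₂ m' hE₂ hE' this] at hmem₂
        exact hmem₂
      · intro hσ
        obtain ⟨i', hi0, hile, hmem'⟩ := hσ
        obtain ⟨τ, rfl⟩ := piSet_head E' lab' i' m' σ hmem'
        have h3 : lab' n' :: (lab' m' :: τ) ∈ PsiSet E' lab' (i + 1) n' :=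
          cons_mem_psiSet hE' ⟨i', hi0, hile, hmem'⟩
        have h4 : lab n :: (lab' m' :: τ) ∈ PsiSet E lab (i + 1) n := by
          rw [h, hpsi]; exact h3
        obtain ⟨m₂, hE₂, hmem₂⟩ := of_cons_mem_psiSet h4 (by simp)
        have : lab m₂ = lab m := by
          obtain ⟨i'', _, _, hm₂⟩ := hmem₂
          obtain ⟨σ₂, hσ₂⟩ := piSet_head E lab i'' m₂ _ hm₂
          injection hσ₂ with hh _
          rw [← hh, hlabm]
        rw [out_inj n m₂ m hE₂ hE this] at hmem₂
        exact hmem₂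
    have corr' : ∀ m : Node, E n m → ∃ m', E' n' m' ∧ lab m = lab' m' ∧
        PsiSet E lab i m = PsiSet E' lab' i m' := by
      intro m hE
      have h1 : lab n :: [lab m] ∈ PsiSet E lab (i + 1) n :=
        cons_mem_psiSet hE (singleton_mem_psiSet E lab hi m)
      have h2 : lab' n' :: [lab m] ∈ PsiSet E' lab' (i + 1) n' := by
        rw [← h, ← hpsi]; exact h1
      obtain ⟨m', hE', hmem⟩ := of_cons_mem_psiSet h2 (by simp)
      have hlabm : lab m = lab' m' := by
        obtain ⟨i', _, _, hm⟩ := hmem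
        obtain ⟨σ, hσ⟩ := piSet_head E' lab' i' m' _ hm
        exact (List.cons.injEq _ _ _ _ ▸ hσ).1
      obtain ⟨m₂, hE₂, hlab₂, hps₂⟩ := corr m' hE'
      have : m₂ = m := out_inj n m₂ m hE₂ hE (by rw [hlab₂, hlabm])
      subst this
      exact ⟨m', hE', hlabm, hps₂⟩
    -- scenes agree
    have hscene : BeliefScene E lab S n = BeliefScene E' lab' S' n' := by
      funext b
      ext x
      simp only [BeliefScene, Set.mem_setOf_eq]
      constructor
      · intro hx m' hE' hl'
        obtain ⟨m, hE, hlabm, hps⟩ := corr m' hE'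
        obtain ⟨_, hheq⟩ := IH m m' hps
        have hl : lab m = b := hlabm.trans hl'
        exact (mem_cast_iff hl hl' hheq x).mp (hx m hE hl)
      · intro hx m hE hl
        obtain ⟨m', hE', hlabm, hps⟩ := corr' m hE
        obtain ⟨_, hheq⟩ := IH m m' hps
        have hl' : lab' m' = b := hlabm.symm.trans hl
        exact (mem_cast_iff hl' hl hheq.symm x).mp (hx m' hE' hl')
    refine ⟨h, ?_⟩
    rw [Function.iterate_succ_apply', Function.iterate_succ_apply']
    show HEq (RationalResponse (le (lab n)) (lab n) (BeliefScene E lab S n))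
      (RationalResponse (le (lab' n')) (lab' n') (BeliefScene E' lab' S' n'))
    exact heq_rationalResponse le h hscene
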